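/- Let K be an odd positive integer, ε ≥ 0, Δ ∈ [0,1), m ≥ 0 a real number, and δ ∈ [0,1). Let γ : {0,…,K} → [0,1] satisfy γ(l) = γ(K−l) for all l. For p = (p_1,…,p_K) ∈ [0,1]^K let α_l(p) = Σ_{A ⊆ {1,…,K}, |A| = l} Π_{i∈A} p_i · Π_{j∉A} (1−p_j), and let P_γ(p) = Σ_{l=0}^{K} ( γ(l)·1{l ≥ (K+1)/2} + (1−γ(l))/2 ) · α_l(p). Then the following are equivalent: (i) for all p, p' ∈ [0,1]^K with (p_i, p_i') ∈ F(ε,Δ) for every i, both P_γ(p) ≤ e^{mε} P_γ(p') + δ and 1 − P_γ(p) ≤ e^{mε} (1 − P_γ(p')) + δ; (ii) for all p, p' ∈ [0,1]^K with (p_i, p_i') ∈ F(ε,Δ) for every i, f(p, p'; γ) := Σ_{l=0}^{(K−1)/2} ( e^{mε} α_l(p') − α_l(p) ) γ(l) + Σ_{l=(K+1)/2}^{K} ( α_l(p) − e^{mε} α_l(p') ) γ(l) ≤ e^{mε} − 1 + 2δ. -/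

import Mathlib

/-!
Write `E = e^{mε}` and `b(p) = Σ_{l > K/2} γ(l) α_l(p) − Σ_{l < K/2} γ(l) α_l(p)`. Since the
masses `α_l(p)` sum to one, `P_γ(p) = (1 + b(p)) / 2` and `f(p, p'; γ) = b(p) − E b(p')`, so the
first DP inequality is exactly `f(p, p'; γ) ≤ E − 1 + 2δ`. Replacing `p, p'` by `1 − p, 1 − p'`
maps `α_l` to `α_{K−l}`; for odd `K` and symmetric `γ` this negates `b`, so the second DP
inequality is the first one at the complementary pair, which is again feasible.
-/

open Finset

/-- Poisson–Binomial probability mass at `l` for parameters `p : Fin K → ℝ`. -/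
noncomputable def alphaPB (K : ℕ) (p : Fin K → ℝ) (l : ℕ) : ℝ :=
  ∑ A ∈ Finset.powersetCard l (Finset.univ : Finset (Fin K)),
    (∏ i ∈ A, p i) * ∏ j ∈ Aᶜ, (1 - p j)

/-- The feasible region `F(ε,Δ)`: pairs `(p,p') ∈ [0,1]²` consistent with
`(ε,Δ)`-differential privacy. -/
def Feas (ε Δ p p' : ℝ) : Prop :=
  0 ≤ p ∧ p ≤ 1 ∧ 0 ≤ p' ∧ p' ≤ 1 ∧
  p ≤ Real.exp ε * p' + Δ ∧ p' ≤ Real.exp ε * p + Δ ∧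
  1 - p ≤ Real.exp ε * (1 - p') + Δ ∧ 1 - p' ≤ Real.exp ε * (1 - p) + Δ

/-- Probability that DaRRM with noise function `γ` outputs 1 when the sum of the
`K` binary outcomes is Poisson–Binomial with parameters `p`. -/
noncomputable def Pout (K : ℕ) (γ : ℕ → ℝ) (p : Fin K → ℝ) : ℝ :=
  ∑ l ∈ Finset.range (K + 1),
    (γ l * (if (K + 1) / 2 ≤ l then (1 : ℝ) else 0) + (1 - γ l) / 2) * alphaPB K p l

/-- The privacy cost objective `f(p, p'; γ)`. -/
noncomputable def privCost (K : ℕ) (m ε : ℝ) (γ : ℕ → ℝ) (p p' : Fin K → ℝ) : ℝ :=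
  (∑ l ∈ Finset.range ((K + 1) / 2),
      (Real.exp (m * ε) * alphaPB K p' l - alphaPB K p l) * γ l)
  + ∑ l ∈ Finset.Icc ((K + 1) / 2) K,
      (alphaPB K p l - Real.exp (m * ε) * alphaPB K p' l) * γ l

lemma sum_range_succ_eq_sum_range_add_sum_Icc {M : Type*} [AddCommMonoid M] (f : ℕ → M)
    {n K : ℕ} (hn : n ≤ K + 1) :
    ∑ l ∈ range (K + 1), f l = ∑ l ∈ range n, f l + ∑ l ∈ Icc n K, f l := by
  rw [range_eq_Ico, ← sum_Ico_consecutive _ (Nat.zero_le _) hn, ← range_eq_Ico,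
    Ico_add_one_right_eq_Icc]

lemma sum_range_half_reflect {M : Type*} [AddCommMonoid M] {K : ℕ} (hK : Odd K) (f : ℕ → M) :
    ∑ l ∈ range ((K + 1) / 2), f (K - l) = ∑ l ∈ Icc ((K + 1) / 2) K, f l := by
  obtain ⟨t, rfl⟩ := hK
  refine sum_nbij' (2 * t + 1 - ·) (2 * t + 1 - ·) ?_ ?_ ?_ ?_ fun _ _ => rfl <;>
    intro l hl <;> simp only [mem_range, mem_Icc] at hl ⊢ <;> omega

lemma sum_alphaPB (K : ℕ) (p : Fin K → ℝ) : ∑ l ∈ range (K + 1), alphaPB K p l = 1 := by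
  have h := prod_add p (fun i => 1 - p i) univ
  simp only [add_sub_cancel, prod_const_one, sum_powerset, card_univ, Fintype.card_fin,
    ← compl_eq_univ_sdiff] at h
  exact h.symm

lemma alphaPB_one_sub (K : ℕ) (p : Fin K → ℝ) {l : ℕ} (hl : l ≤ K) :
    alphaPB K (fun i => 1 - p i) l = alphaPB K p (K - l) := by
  refine sum_nbij' (·ᶜ) (·ᶜ) ?_ ?_ (fun _ _ => compl_compl _) (fun _ _ => compl_compl _) ?_
  · intro A hA
    rw [mem_powersetCard] at hA ⊢
    rw [card_compl, Fintype.card_fin, hA.2]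
    exact ⟨subset_univ _, rfl⟩
  · intro B hB
    rw [mem_powersetCard] at hB ⊢
    rw [card_compl, Fintype.card_fin, hB.2]
    exact ⟨subset_univ _, by omega⟩
  · intro A _
    simp only [sub_sub_cancel, compl_compl]
    exact mul_comm _ _

lemma Feas.one_sub {ε Δ p p' : ℝ} (h : Feas ε Δ p p') : Feas ε Δ (1 - p) (1 - p') := by
  obtain ⟨h₁, h₂, h₃, h₄, h₅, h₆, h₇, h₈⟩ := h
  refine ⟨by linarith, by linarith, by linarith, by linarith, h₇, h₈, ?_, ?_⟩ <;>
    simpa only [sub_sub_cancel]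

noncomputable def outputBias (K : ℕ) (γ : ℕ → ℝ) (p : Fin K → ℝ) : ℝ :=
  ∑ l ∈ Icc ((K + 1) / 2) K, alphaPB K p l * γ l - ∑ l ∈ range ((K + 1) / 2), alphaPB K p l * γ l

lemma Pout_eq (K : ℕ) (γ : ℕ → ℝ) (p : Fin K → ℝ) :
    Pout K γ p = (1 + outputBias K γ p) / 2 := by
  have hn : (K + 1) / 2 ≤ K + 1 := Nat.div_le_self _ _
  have hlow : ∀ l ∈ range ((K + 1) / 2),
      (γ l * (if (K + 1) / 2 ≤ l then (1 : ℝ) else 0) + (1 - γ l) / 2) * alphaPB K p l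
        = (alphaPB K p l - alphaPB K p l * γ l) / 2 := by
    intro l hl
    rw [if_neg (by simpa using hl)]
    ring
  have hupp : ∀ l ∈ Icc ((K + 1) / 2) K,
      (γ l * (if (K + 1) / 2 ≤ l then (1 : ℝ) else 0) + (1 - γ l) / 2) * alphaPB K p l
        = (alphaPB K p l + alphaPB K p l * γ l) / 2 := by
    intro l hl
    rw [if_pos (mem_Icc.1 hl).1]
    ring
  have hsum := sum_alphaPB K p
  rw [sum_range_succ_eq_sum_range_add_sum_Icc _ hn] at hsum
  rw [Pout, sum_range_succ_eq_sum_range_add_sum_Icc _ hn, sum_congr rfl hlow, sum_congr rfl hupp,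
    ← sum_div, ← sum_div, sum_sub_distrib, sum_add_distrib, outputBias]
  linarith

lemma privCost_eq (K : ℕ) (m ε : ℝ) (γ : ℕ → ℝ) (p p' : Fin K → ℝ) :
    privCost K m ε γ p p'
      = outputBias K γ p - Real.exp (m * ε) * outputBias K γ p' := by
  simp only [privCost, outputBias, mul_sub, mul_sum, sub_mul, sum_sub_distrib, mul_assoc]
  ring

lemma outputBias_one_sub {K : ℕ} (hK : Odd K) {γ : ℕ → ℝ} (hγ : ∀ l ≤ K, γ l = γ (K - l))
    (p : Fin K → ℝ) : outputBias K γ (fun i => 1 - p i) = -outputBias K γ p := by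
  have hlow : ∑ l ∈ range ((K + 1) / 2), alphaPB K (fun i => 1 - p i) l * γ l
      = ∑ l ∈ Icc ((K + 1) / 2) K, alphaPB K p l * γ l := by
    rw [← sum_range_half_reflect hK]
    refine sum_congr rfl fun l hl => ?_
    have hl : l ≤ K := by have := mem_range.1 hl; omega
    rw [alphaPB_one_sub K p hl, hγ l hl]
  have hupp : ∑ l ∈ Icc ((K + 1) / 2) K, alphaPB K (fun i => 1 - p i) l * γ l
      = ∑ l ∈ range ((K + 1) / 2), alphaPB K p l * γ l := by
    rw [← sum_range_half_reflect hK]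
    refine sum_congr rfl fun l hl => ?_
    have hl : l ≤ K := by have := mem_range.1 hl; omega
    rw [alphaPB_one_sub K p (Nat.sub_le K l), Nat.sub_sub_self hl, ← hγ l hl]
  rw [outputBias, outputBias, hlow, hupp, neg_sub]

theorem statement3 (K : ℕ) (hK : Odd K) (ε Δ m δ : ℝ) (γ : ℕ → ℝ)
    (hγsym : ∀ l ≤ K, γ l = γ (K - l)) :
    (∀ p p' : Fin K → ℝ, (∀ i, Feas ε Δ (p i) (p' i)) →
        Pout K γ p ≤ Real.exp (m * ε) * Pout K γ p' + δ ∧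
        1 - Pout K γ p ≤ Real.exp (m * ε) * (1 - Pout K γ p') + δ)
    ↔ (∀ p p' : Fin K → ℝ, (∀ i, Feas ε Δ (p i) (p' i)) →
        privCost K m ε γ p p' ≤ Real.exp (m * ε) - 1 + 2 * δ) := by
  simp only [Pout_eq, privCost_eq]
  constructor
  · intro h p p' hf
    linarith [(h p p' hf).1]
  · intro h p p' hf
    have hcompl := h _ _ fun i => (hf i).one_sub
    rw [outputBias_one_sub hK hγsym, outputBias_one_sub hK hγsym] at hcompl
    exact ⟨by linarith [h p p' hf], by linarith⟩
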